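/- On ℂ^4, let Π_± = (I₄ ± X⊗X)/2 and Π'_± = (I₄ ± Y⊗Y)/2, and define the maps E₁(ρ) = Π₋ ρ Π₋ + (Z⊗I₂) Π₊ ρ Π₊ (Z⊗I₂) and E₂(ρ) = Π'₋ ρ Π'₋ + (X⊗I₂) Π'₊ ρ Π'₊ (X⊗I₂). Then for every density matrix ρ on ℂ^4, E₂(E₁(ρ)) = |Ψ⁻⟩⟨Ψ⁻|, where |Ψ⁻⟩ = (|01⟩ − |10⟩)/√2. That is, two pumping steps deterministically prepare the singlet Bell state from an arbitrary two-qubit state. -/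
import Mathlib


open Matrix
open Kronecker
open scoped ComplexOrder

/-- Pauli matrices. -/
def PX : Matrix (Fin 2) (Fin 2) ℂ := !![0, 1; 1, 0]
def PY : Matrix (Fin 2) (Fin 2) ℂ := !![0, -Complex.I; Complex.I, 0]
def PZ : Matrix (Fin 2) (Fin 2) ℂ := !![1, 0; 0, -1]

/-- Projectors onto the `±1` eigenspaces of `X⊗X` and of `Y⊗Y` on `ℂ⁴`. -/
noncomputable def ProjXp : Matrix (Fin 2 × Fin 2) (Fin 2 × Fin 2) ℂ :=
  ((2 : ℂ)⁻¹) • ((1 : Matrix (Fin 2 × Fin 2) (Fin 2 × Fin 2) ℂ) + PX ⊗ₖ PX)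
noncomputable def ProjXm : Matrix (Fin 2 × Fin 2) (Fin 2 × Fin 2) ℂ :=
  ((2 : ℂ)⁻¹) • ((1 : Matrix (Fin 2 × Fin 2) (Fin 2 × Fin 2) ℂ) - PX ⊗ₖ PX)
noncomputable def ProjYp : Matrix (Fin 2 × Fin 2) (Fin 2 × Fin 2) ℂ :=
  ((2 : ℂ)⁻¹) • ((1 : Matrix (Fin 2 × Fin 2) (Fin 2 × Fin 2) ℂ) + PY ⊗ₖ PY)
noncomputable def ProjYm : Matrix (Fin 2 × Fin 2) (Fin 2 × Fin 2) ℂ :=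
  ((2 : ℂ)⁻¹) • ((1 : Matrix (Fin 2 × Fin 2) (Fin 2 × Fin 2) ℂ) - PY ⊗ₖ PY)

/-- The singlet Bell state `|Ψ⁻⟩ = (|01⟩ − |10⟩)/√2`. -/
noncomputable def PsiM : Fin 2 × Fin 2 → ℂ := fun p =>
  ((if p = (0, 1) then 1 else 0) - (if p = (1, 0) then 1 else 0)) / (Real.sqrt 2 : ℂ)

/-- The first Bell pumping map `E₁(ρ) = Π₋ ρ Π₋ + (Z⊗I) Π₊ ρ Π₊ (Z⊗I)`. -/
noncomputable def E1 (ρ : Matrix (Fin 2 × Fin 2) (Fin 2 × Fin 2) ℂ) :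
    Matrix (Fin 2 × Fin 2) (Fin 2 × Fin 2) ℂ :=
  ProjXm * ρ * ProjXm
    + (PZ ⊗ₖ (1 : Matrix (Fin 2) (Fin 2) ℂ)) * (ProjXp * ρ * ProjXp)
        * (PZ ⊗ₖ (1 : Matrix (Fin 2) (Fin 2) ℂ))

/-- The second Bell pumping map `E₂(ρ) = Π'₋ ρ Π'₋ + (X⊗I) Π'₊ ρ Π'₊ (X⊗I)`. -/
noncomputable def E2 (ρ : Matrix (Fin 2 × Fin 2) (Fin 2 × Fin 2) ℂ) :
    Matrix (Fin 2 × Fin 2) (Fin 2 × Fin 2) ℂ :=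
  ProjYm * ρ * ProjYm
    + (PX ⊗ₖ (1 : Matrix (Fin 2) (Fin 2) ℂ)) * (ProjYp * ρ * ProjYp)
        * (PX ⊗ₖ (1 : Matrix (Fin 2) (Fin 2) ℂ))


private lemma pair_zero : ((0 : Fin 2), (0 : Fin 2)) = (0 : Fin 2 × Fin 2) := rfl
private lemma pair_one : ((1 : Fin 2), (1 : Fin 2)) = (1 : Fin 2 × Fin 2) := rfl

private lemma sqrt2_sq : ((Real.sqrt 2 : ℝ) : ℂ) * ((Real.sqrt 2 : ℝ) : ℂ) = 2 := by
  rw [← Complex.ofReal_mul, Real.mul_self_sqrt (by norm_num : (0:ℝ) ≤ 2)]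
  norm_num

private noncomputable def sigAux (ρ : Matrix (Fin 2 × Fin 2) (Fin 2 × Fin 2) ℂ) :
    Matrix (Fin 2 × Fin 2) (Fin 2 × Fin 2) ℂ :=
  Matrix.of fun p q =>
    (if p.1 = 0 then 1 else -1) * (if q.1 = 0 then 1 else -1) * (2 : ℂ)⁻¹ *
      (ρ (if p.1 = 0 then p else (0, p.2 + 1)) (if q.1 = 0 then q else (0, q.2 + 1))
        + ρ (if p.1 = 0 then (1, p.2 + 1) else p) (if q.1 = 0 then (1, q.2 + 1) else q))

set_option maxHeartbeats 4000000 in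
private lemma E1_eq (ρ : Matrix (Fin 2 × Fin 2) (Fin 2 × Fin 2) ℂ) : E1 ρ = sigAux ρ := by
  have hf : ∀ i : Fin 2, i = 0 ∨ i = 1 := by decide
  ext ⟨a, b⟩ ⟨c, d⟩
  rcases hf a with rfl | rfl <;> rcases hf b with rfl | rfl <;>
    rcases hf c with rfl | rfl <;> rcases hf d with rfl | rfl <;>
    · simp [E1, ProjXm, ProjXp, PX, PZ, sigAux, Matrix.mul_apply,
        Fintype.sum_prod_type, Fin.sum_univ_succ, Matrix.one_apply, Prod.ext_iff]
      ring

set_option maxHeartbeats 1000000 in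
private lemma target_eq : vecMulVec PsiM (star PsiM) = Matrix.of fun p q =>
    ((if p = ((0 : Fin 2), (1 : Fin 2)) then 1 else 0) - (if p = (1, 0) then 1 else 0)) *
      ((if q = ((0 : Fin 2), (1 : Fin 2)) then 1 else 0) - (if q = (1, 0) then 1 else 0)) *
      (2 : ℂ)⁻¹ := by
  have hf : ∀ i : Fin 2, i = 0 ∨ i = 1 := by decide
  ext ⟨a, b⟩ ⟨c, d⟩
  rcases hf a with rfl | rfl <;> rcases hf b with rfl | rfl <;>
    rcases hf c with rfl | rfl <;> rcases hf d with rfl | rfl <;>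
    · have hne : ((Real.sqrt 2 : ℝ) : ℂ) ≠ 0 :=
        Complex.ofReal_ne_zero.mpr (ne_of_gt (Real.sqrt_pos.mpr (by norm_num)))
      simp [vecMulVec_apply, PsiM, Prod.ext_iff, Complex.star_def, map_div₀,
        Complex.conj_ofReal] <;>
      · field_simp
        first
          | ring1
          | linear_combination sqrt2_sq
          | linear_combination -sqrt2_sq

set_option maxHeartbeats 4000000 in
/-- Bell-state pumping (the two-qubit instance of Theorem 3.2): two pumping steps
deterministically prepare the singlet `|Ψ⁻⟩⟨Ψ⁻|` from an arbitrary density matrix. -/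
theorem Bell_state_pumping (ρ : Matrix (Fin 2 × Fin 2) (Fin 2 × Fin 2) ℂ)
    (hρ : ρ.PosSemidef) (hρtr : ρ.trace = 1) :
    E2 (E1 ρ) = vecMulVec PsiM (star PsiM) := by
  have hf : ∀ i : Fin 2, i = 0 ∨ i = 1 := by decide
  have htr := hρtr
  simp [Matrix.trace, Matrix.diag, Fintype.sum_prod_type, Fin.sum_univ_succ,
    pair_zero, pair_one] at htr
  rw [E1_eq, target_eq]
  ext ⟨a, b⟩ ⟨c, d⟩
  rcases hf a with rfl | rfl <;> rcases hf b with rfl | rfl <;>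
    rcases hf c with rfl | rfl <;> rcases hf d with rfl | rfl <;>
    · simp [E2, ProjYm, ProjYp, PX, PY, sigAux, Matrix.mul_apply, pair_zero, pair_one,
        Fintype.sum_prod_type, Fin.sum_univ_succ, Matrix.one_apply, Prod.ext_iff] <;>
      first
        | ring1
        | linear_combination (2 : ℂ)⁻¹ * htr
        | linear_combination (-(2 : ℂ)⁻¹) * htr
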